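/- Let B ⊆ (ℂ*)ⁿ be a nonempty subset and v ∈ ℤⁿ a nonzero primitive vector. Suppose that for every ν ∈ ℤⁿ with ⟨ν, v⟩ = 0 the character χ_ν(z) = z₁^{ν₁}⋯zₙ^{νₙ} is constant on B. Then there exists a ∈ (ℂ*)ⁿ such that B ⊆ a·C_v, where C_v = { (e^{v₁ w}, …, e^{vₙ w}) : w ∈ ℂ } and a·C_v denotes coordinatewise multiplication. -/

import Mathlib

/-!
Fix `b ∈ B`. For `z ∈ B` every character orthogonal to `v` is trivial on `y = z / b`.
Primitivity gives `u` with `⟨v, u⟩ = 1`; since `eᵢ - vᵢ u` is orthogonal to `v`,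
`yᵢ = c ^ vᵢ` with `c = χ_u(y)`, and `z = b · (exp (vᵢ log c))ᵢ`.
-/

open Finset

theorem eq_prod_zpow_zpow_of_prod_zpow_eq_one {G ι : Type*} [CommGroup G] [Fintype ι]
    [DecidableEq ι] {y : ι → G} {v u : ι → ℤ} (hu : ∑ j, v j * u j = 1)
    (hy : ∀ ν : ι → ℤ, ∑ j, ν j * v j = 0 → ∏ j, y j ^ ν j = 1) (i : ι) :
    y i = (∏ j, y j ^ u j) ^ v i := by
  set e : ι → ℤ := Pi.single i 1
  have horth : ∑ j, (e j - v i * u j) * v j = 0 := by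
    simp only [e, sub_mul, sum_sub_distrib, Pi.single_apply, ite_mul, one_mul, zero_mul,
      sum_ite_eq', mem_univ, if_true, mul_assoc, ← mul_sum, mul_comm (u _), hu, mul_one,
      sub_self]
  have hprod_e : ∏ j, y j ^ e j = y i := by
    simp [e, Pi.single_apply, apply_ite]
  have h : ∏ j, y j ^ (e j - v i * u j) = 1 := hy _ horth
  simp_rw [zpow_sub, prod_mul_distrib, prod_inv_distrib, hprod_e, mul_inv_eq_one] at h
  rw [h, ← prod_zpow]
  simp_rw [← zpow_mul, mul_comm]

theorem contained_in_cylinder_general {n : ℕ} (B : Set (Fin n → ℂˣ)) (hB : B.Nonempty)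
    (v : Fin n → ℤ)
    (hprim : Finset.univ.gcd v = 1)
    (hconst : ∀ ν : Fin n → ℤ, (∑ i, ν i * v i) = 0 →
      ∀ z ∈ B, ∀ w ∈ B, (∏ i, z i ^ ν i) = ∏ i, w i ^ ν i) :
    ∃ a : Fin n → ℂˣ, ∀ z ∈ B, ∃ w : ℂ,
      ∀ i, (z i : ℂ) = (a i : ℂ) * Complex.exp ((v i : ℂ) * w) := by
  obtain ⟨b, hb⟩ := hB
  obtain ⟨u, hu⟩ := gcd_eq_sum_mul univ v
  rw [hprim] at hu
  refine ⟨b, fun z hz => ?_⟩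
  have hy : ∀ ν : Fin n → ℤ, ∑ i, ν i * v i = 0 → ∏ i, (z i / b i) ^ ν i = 1 :=
    fun ν hν => by rw [prod_congr rfl fun i _ => div_zpow .., prod_div_distrib,
      hconst ν hν z hz b hb, div_self']
  set c := ∏ j, (z j / b j) ^ u j
  refine ⟨Complex.log c, fun i => ?_⟩
  have hzi : z i = b i * c ^ v i := by
    rw [← eq_prod_zpow_zpow_of_prod_zpow_eq_one hu.symm hy i, mul_div_cancel]
  rw [hzi, Units.val_mul, Units.val_zpow_eq_zpow_val, Complex.exp_int_mul,
    Complex.exp_log c.ne_zero]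

/-- If every character `χ_ν` with `⟨ν, v⟩ = 0` is constant on a nonempty set
`B ⊆ (ℂ*)ⁿ`, where `v ∈ ℤⁿ` is nonzero and primitive, then `B` is contained in a
multiplicative translate `a · C_v` of the holomorphic cylinder
`C_v = {(e^{v₁ w}, …, e^{vₙ w})}` parallel to `v`. -/
theorem contained_in_cylinder {n : ℕ} (B : Set (Fin n → ℂˣ)) (hB : B.Nonempty)
    (v : Fin n → ℤ) (hv : v ≠ 0)
    (hprim : Finset.univ.gcd v = 1)
    (hconst : ∀ ν : Fin n → ℤ, (∑ i, ν i * v i) = 0 →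
      ∀ z ∈ B, ∀ w ∈ B, (∏ i, z i ^ ν i) = ∏ i, w i ^ ν i) :
    ∃ a : Fin n → ℂˣ, ∀ z ∈ B, ∃ w : ℂ,
      ∀ i, (z i : ℂ) = (a i : ℂ) * Complex.exp ((v i : ℂ) * w) :=
  contained_in_cylinder_general B hB v hprim hconst
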